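/- Fix n ≥ 3 and θ ∈ (0, π/4). Set α₀ = arctan(tan(θ)^{−3/(3n−4)}) and α₁ = −arctan(tan(θ)^{−1/(3n−4)}). Then cos^{n−1}(α₀) sin(α₁) cos(θ) + sin^{n−1}(α₀) cos(α₁) sin(θ) = 0 and cos^{n−2}(α₀) cos²(α₁) cos(θ) − sin^{n−2}(α₀) sin²(α₁) sin(θ) = 0, while cos^n(α₀) cos(θ) − sin^n(α₀) sin(θ) ≠ 0. -/

import Mathlib

open Real

/-!
Dividing each amplitude by the nonzero cosines leaves a bracket in `tan α₀`, `tan α₁`, `tan θ`.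
With `v = tan θ ^ (-1/(3n-4)) > 1` these tangents are `v³`, `-v` and `v ^ -(3n-4)`, so the
brackets become monomial identities in `v`: the first two vanish and the third is `1 - v⁴ < 0`.
-/

section TanFactorization

variable {x y z : ℝ}

lemma cos_pow_mul_sin_mul_cos_add_sin_pow_mul_cos_mul_sin (k : ℕ)
    (hx : cos x ≠ 0) (hy : cos y ≠ 0) (hz : cos z ≠ 0) :
    cos x ^ k * sin y * cos z + sin x ^ k * cos y * sin z
      = cos x ^ k * cos y * cos z * (tan y + tan x ^ k * tan z) := by
  rw [← tan_mul_cos hx, ← tan_mul_cos hy, ← tan_mul_cos hz]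
  ring

lemma cos_pow_mul_cos_sq_mul_cos_sub_sin_pow_mul_sin_sq_mul_sin (k : ℕ)
    (hx : cos x ≠ 0) (hy : cos y ≠ 0) (hz : cos z ≠ 0) :
    cos x ^ k * cos y ^ 2 * cos z - sin x ^ k * sin y ^ 2 * sin z
      = cos x ^ k * cos y ^ 2 * cos z * (1 - tan x ^ k * tan y ^ 2 * tan z) := by
  rw [← tan_mul_cos hx, ← tan_mul_cos hy, ← tan_mul_cos hz]
  ring

lemma cos_pow_mul_cos_sub_sin_pow_mul_sin (k : ℕ) (hx : cos x ≠ 0) (hz : cos z ≠ 0) :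
    cos x ^ k * cos z - sin x ^ k * sin z = cos x ^ k * cos z * (1 - tan x ^ k * tan z) := by
  rw [← tan_mul_cos hx, ← tan_mul_cos hz]
  ring

end TanFactorization

lemma Real.rpow_neg_natCast_div_natCast {t : ℝ} (ht : 0 ≤ t) (k N : ℕ) :
    t ^ (-(k : ℝ) / N) = (t ^ (-1 / N : ℝ)) ^ k := by
  rw [← rpow_natCast, ← rpow_mul ht, neg_div, neg_div, neg_mul, div_mul_eq_mul_div, one_mul]

lemma Real.rpow_neg_one_div_natCast_pow_mul_self {t : ℝ} (ht : 0 < t) {N : ℕ} (hN : N ≠ 0) :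
    (t ^ (-1 / N : ℝ)) ^ N * t = 1 := by
  rw [← rpow_neg_natCast_div_natCast ht.le, neg_div, div_self (by exact_mod_cast hN), rpow_neg_one,
    inv_mul_cancel₀ ht.ne']

lemma Real.tan_mem_Ioo_zero_one {θ : ℝ} (hθ : θ ∈ Set.Ioo 0 (π / 4)) : tan θ ∈ Set.Ioo 0 1 := by
  obtain ⟨hθ₀, hθ₁⟩ := hθ
  refine ⟨tan_pos_of_pos_of_lt_pi_div_two hθ₀ (by linarith [pi_pos]), ?_⟩
  rw [← tan_pi_div_four]
  exact tan_lt_tan_of_lt_of_lt_pi_div_two (by linarith [pi_pos]) (by linarith [pi_pos]) hθ₁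

theorem stmt11 (n : ℕ) (hn : 3 ≤ n) (θ : ℝ) (hθ : θ ∈ Set.Ioo 0 (π / 4))
    (α₀ α₁ : ℝ)
    (hα₀ : α₀ = arctan (tan θ ^ (-(3 : ℝ) / (3 * (n : ℝ) - 4))))
    (hα₁ : α₁ = -arctan (tan θ ^ (-(1 : ℝ) / (3 * (n : ℝ) - 4)))) :
    cos α₀ ^ (n - 1) * sin α₁ * cos θ + sin α₀ ^ (n - 1) * cos α₁ * sin θ = 0 ∧
    cos α₀ ^ (n - 2) * cos α₁ ^ 2 * cos θ - sin α₀ ^ (n - 2) * sin α₁ ^ 2 * sin θ = 0 ∧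
    cos α₀ ^ n * cos θ - sin α₀ ^ n * sin θ ≠ 0 := by
  obtain ⟨m, rfl⟩ : ∃ m, n = m + 3 := ⟨n - 3, by omega⟩
  have hN : 3 * ((m + 3 : ℕ) : ℝ) - 4 = ((3 * m + 5 : ℕ) : ℝ) := by push_cast; ring
  rw [hN] at hα₀ hα₁
  obtain ⟨ht₀, ht₁⟩ := tan_mem_Ioo_zero_one hθ
  set v := tan θ ^ (-1 / (3 * m + 5 : ℕ) : ℝ)
  have hv : 1 < v :=
    one_lt_rpow_of_pos_of_lt_one_of_neg ht₀ ht₁ (div_neg_of_neg_of_pos (by norm_num) (by positivity))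
  have htθ : v ^ (3 * m + 5) * tan θ = 1 := rpow_neg_one_div_natCast_pow_mul_self ht₀ (by omega)
  have htα₀ : tan α₀ = v ^ 3 := by
    rw [hα₀, tan_arctan]
    simpa only [Nat.cast_ofNat] using rpow_neg_natCast_div_natCast ht₀.le 3 (3 * m + 5)
  have htα₁ : tan α₁ = -v := by rw [hα₁, tan_neg, tan_arctan]
  have hcθ : cos θ ≠ 0 :=
    (cos_pos_of_mem_Ioo ⟨by linarith [hθ.1, pi_pos], by linarith [hθ.2, pi_pos]⟩).ne'
  have hcα₀ : cos α₀ ≠ 0 := hα₀ ▸ (cos_arctan_pos _).ne'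
  have hcα₁ : cos α₁ ≠ 0 := by rw [hα₁, cos_neg]; exact (cos_arctan_pos _).ne'
  rw [cos_pow_mul_sin_mul_cos_add_sin_pow_mul_cos_mul_sin _ hcα₀ hcα₁ hcθ,
    cos_pow_mul_cos_sq_mul_cos_sub_sin_pow_mul_sin_sq_mul_sin _ hcα₀ hcα₁ hcθ,
    cos_pow_mul_cos_sub_sin_pow_mul_sin _ hcα₀ hcθ, htα₀, htα₁,
    show m + 3 - 1 = m + 2 by omega, show m + 3 - 2 = m + 1 by omega]
  refine ⟨mul_eq_zero_of_right _ ?_, mul_eq_zero_of_right _ ?_,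
    mul_ne_zero (mul_ne_zero (pow_ne_zero _ hcα₀) hcθ) ?_⟩
  · linear_combination v * htθ
  · linear_combination -htθ
  · have hdiag : (v ^ 3) ^ (m + 3) * tan θ = v ^ 4 := by linear_combination v ^ 4 * htθ
    rw [hdiag, sub_ne_zero]
    exact (one_lt_pow₀ hv (by norm_num)).ne
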